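/- For a three-qubit pure state |ψ⟩ = α₀|000⟩ + α₁e^{iθ}|100⟩ + α₂|101⟩ + α₃|110⟩ + α₄|111⟩ with α₀,…,α₄ ≥ 0, Σᵢ αᵢ² = 1 and θ ∈ [0,π], the average teleportation fidelities f(ρ_ij) = (τ_ij + 2)/3 of the two-qubit reduced states and the steering observables maintain the same ordering: f(ρ₁₂) > f(ρ₁₃) > f(ρ₂₃) if and only if S₁₂² > S₁₃² > S₂₃² (equivalently S₁₂ > S₁₃ > S₂₃), and likewise each pairwise inequality τ_ij > τ_ik holds if and only if S_ij² > S_ik². -/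

import Mathlib

/-- Squared steering observable S₁₂² of the reduced state ρ₁₂ of the three-qubit
pure state α₀|000⟩ + α₁e^{iθ}|100⟩ + α₂|101⟩ + α₃|110⟩ + α₄|111⟩. -/
noncomputable def S12sq (a0 a1 a2 a3 a4 θ : ℝ) : ℝ :=
  1 + 8 * a0 ^ 2 * a3 ^ 2 - 4 * a0 ^ 2 * a2 ^ 2 - 4 * a1 ^ 2 * a4 ^ 2
    - 4 * a2 ^ 2 * a3 ^ 2 + 8 * a1 * a2 * a3 * a4 * Real.cos θ

/-- Squared steering observable S₁₃² of the reduced state ρ₁₃. -/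
noncomputable def S13sq (a0 a1 a2 a3 a4 θ : ℝ) : ℝ :=
  1 + 8 * a0 ^ 2 * a2 ^ 2 - 4 * a0 ^ 2 * a3 ^ 2 - 4 * a1 ^ 2 * a4 ^ 2
    - 4 * a2 ^ 2 * a3 ^ 2 + 8 * a1 * a2 * a3 * a4 * Real.cos θ

/-- Squared steering observable S₂₃² of the reduced state ρ₂₃. -/
noncomputable def S23sq (a0 a1 a2 a3 a4 θ : ℝ) : ℝ :=
  1 - 4 * a0 ^ 2 * a2 ^ 2 - 4 * a0 ^ 2 * a3 ^ 2 + 8 * a1 ^ 2 * a4 ^ 2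
    + 8 * a2 ^ 2 * a3 ^ 2 - 16 * a1 * a2 * a3 * a4 * Real.cos θ

/-- Partial tangle τ₁₂ = 2α₀√(α₃²+α₄²). -/
noncomputable def tau12 (a0 a1 a2 a3 a4 θ : ℝ) : ℝ :=
  2 * a0 * Real.sqrt (a3 ^ 2 + a4 ^ 2)

/-- Partial tangle τ₁₃ = 2α₀√(α₂²+α₄²). -/
noncomputable def tau13 (a0 a1 a2 a3 a4 θ : ℝ) : ℝ :=
  2 * a0 * Real.sqrt (a2 ^ 2 + a4 ^ 2)

/-- Partial tangle τ₂₃ = 2√(α₀²α₄²+α₁²α₄²+α₂²α₃²−2α₁α₂α₃α₄cosθ). -/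
noncomputable def tau23 (a0 a1 a2 a3 a4 θ : ℝ) : ℝ :=
  2 * Real.sqrt (a0 ^ 2 * a4 ^ 2 + a1 ^ 2 * a4 ^ 2 + a2 ^ 2 * a3 ^ 2
    - 2 * a1 * a2 * a3 * a4 * Real.cos θ)

/-- Average teleportation fidelity f(ρ₁₂), determined by τ₁₂ = 3f(ρ₁₂) − 2. -/
noncomputable def fid12 (a0 a1 a2 a3 a4 θ : ℝ) : ℝ := (tau12 a0 a1 a2 a3 a4 θ + 2) / 3

/-- Average teleportation fidelity f(ρ₁₃), determined by τ₁₃ = 3f(ρ₁₃) − 2. -/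
noncomputable def fid13 (a0 a1 a2 a3 a4 θ : ℝ) : ℝ := (tau13 a0 a1 a2 a3 a4 θ + 2) / 3

/-- Average teleportation fidelity f(ρ₂₃), determined by τ₂₃ = 3f(ρ₂₃) − 2. -/
noncomputable def fid23 (a0 a1 a2 a3 a4 θ : ℝ) : ℝ := (tau23 a0 a1 a2 a3 a4 θ + 2) / 3

/-!
Each difference Sᵢⱼ² − Sᵢₖ² is, identically in the amplitudes, three times τᵢⱼ² − τᵢₖ². As the
tangles are nonnegative, τᵢₖ < τᵢⱼ ⟺ τᵢₖ² < τᵢⱼ², so the fidelities and the squared steering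
observables are ordered alike. For the chained ordering of the square roots S₂₃² ≥ 0 suffices,
and on the unit sphere S₂₃² is a sum of squares.
-/

lemma fidelity_lt_iff_of_sub_eq {τ τ' S S' : ℝ} (hτ : 0 ≤ τ) (hτ' : 0 ≤ τ')
    (h : S - S' = 3 * (τ ^ 2 - τ' ^ 2)) :
    (τ' + 2) / 3 < (τ + 2) / 3 ↔ S' < S := by
  rw [div_lt_div_iff_of_pos_right three_pos, add_lt_add_iff_right, ← sq_lt_sq₀ hτ' hτ]
  constructor <;> intro <;> linarith

lemma sqrt_lt_sqrt_chain_iff {x y z : ℝ} (hz : 0 ≤ z) :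
    (√y < √x ∧ √z < √y) ↔ (y < x ∧ z < y) := by
  constructor
  · rintro ⟨hyx, hzy⟩
    have hzy' : z < y := (Real.sqrt_lt_sqrt_iff hz).1 hzy
    exact ⟨(Real.sqrt_lt_sqrt_iff (hz.trans hzy'.le)).1 hyx, hzy'⟩
  · rintro ⟨hyx, hzy⟩
    exact ⟨Real.sqrt_lt_sqrt (hz.trans hzy.le) hyx, Real.sqrt_lt_sqrt hz hzy⟩

section ThreeQubit

variable {a0 a1 a2 a3 a4 θ : ℝ}

lemma tau12_sq : tau12 a0 a1 a2 a3 a4 θ ^ 2 = 4 * a0 ^ 2 * (a3 ^ 2 + a4 ^ 2) := by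
  rw [tau12, mul_pow, Real.sq_sqrt (by positivity)]
  ring

lemma tau13_sq : tau13 a0 a1 a2 a3 a4 θ ^ 2 = 4 * a0 ^ 2 * (a2 ^ 2 + a4 ^ 2) := by
  rw [tau13, mul_pow, Real.sq_sqrt (by positivity)]
  ring

lemma tau23_radicand_nonneg (h1 : 0 ≤ a1) (h2 : 0 ≤ a2) (h3 : 0 ≤ a3) (h4 : 0 ≤ a4) :
    0 ≤ a0 ^ 2 * a4 ^ 2 + a1 ^ 2 * a4 ^ 2 + a2 ^ 2 * a3 ^ 2
      - 2 * a1 * a2 * a3 * a4 * Real.cos θ := by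
  have hsos : a0 ^ 2 * a4 ^ 2 + a1 ^ 2 * a4 ^ 2 + a2 ^ 2 * a3 ^ 2
      - 2 * a1 * a2 * a3 * a4 * Real.cos θ
      = (a0 * a4) ^ 2 + (a1 * a4 - a2 * a3) ^ 2
        + 2 * (a1 * a2 * a3 * a4) * (1 - Real.cos θ) := by
    ring
  rw [hsos]
  exact add_nonneg (by positivity)
    (mul_nonneg (by positivity) (sub_nonneg.2 (Real.cos_le_one θ)))

lemma tau23_sq (h1 : 0 ≤ a1) (h2 : 0 ≤ a2) (h3 : 0 ≤ a3) (h4 : 0 ≤ a4) :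
    tau23 a0 a1 a2 a3 a4 θ ^ 2 = 4 * (a0 ^ 2 * a4 ^ 2 + a1 ^ 2 * a4 ^ 2 + a2 ^ 2 * a3 ^ 2
      - 2 * a1 * a2 * a3 * a4 * Real.cos θ) := by
  rw [tau23, mul_pow, Real.sq_sqrt (tau23_radicand_nonneg h1 h2 h3 h4)]
  ring

lemma tau12_nonneg (h0 : 0 ≤ a0) : 0 ≤ tau12 a0 a1 a2 a3 a4 θ := by
  unfold tau12
  positivity

lemma tau13_nonneg (h0 : 0 ≤ a0) : 0 ≤ tau13 a0 a1 a2 a3 a4 θ := by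
  unfold tau13
  positivity

lemma tau23_nonneg : 0 ≤ tau23 a0 a1 a2 a3 a4 θ := by
  unfold tau23
  positivity

lemma S12sq_sub_S13sq :
    S12sq a0 a1 a2 a3 a4 θ - S13sq a0 a1 a2 a3 a4 θ
      = 3 * (tau12 a0 a1 a2 a3 a4 θ ^ 2 - tau13 a0 a1 a2 a3 a4 θ ^ 2) := by
  rw [tau12_sq, tau13_sq, S12sq, S13sq]
  ring

lemma S12sq_sub_S23sq (h1 : 0 ≤ a1) (h2 : 0 ≤ a2) (h3 : 0 ≤ a3) (h4 : 0 ≤ a4) :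
    S12sq a0 a1 a2 a3 a4 θ - S23sq a0 a1 a2 a3 a4 θ
      = 3 * (tau12 a0 a1 a2 a3 a4 θ ^ 2 - tau23 a0 a1 a2 a3 a4 θ ^ 2) := by
  rw [tau12_sq, tau23_sq h1 h2 h3 h4, S12sq, S23sq]
  ring

lemma S13sq_sub_S23sq (h1 : 0 ≤ a1) (h2 : 0 ≤ a2) (h3 : 0 ≤ a3) (h4 : 0 ≤ a4) :
    S13sq a0 a1 a2 a3 a4 θ - S23sq a0 a1 a2 a3 a4 θ
      = 3 * (tau13 a0 a1 a2 a3 a4 θ ^ 2 - tau23 a0 a1 a2 a3 a4 θ ^ 2) := by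
  rw [tau13_sq, tau23_sq h1 h2 h3 h4, S13sq, S23sq]
  ring

lemma S23sq_eq_of_norm_eq_one (hsum : a0 ^ 2 + a1 ^ 2 + a2 ^ 2 + a3 ^ 2 + a4 ^ 2 = 1) :
    S23sq a0 a1 a2 a3 a4 θ
      = (a0 ^ 2 - a1 ^ 2 - a2 ^ 2 - a3 ^ 2 - a4 ^ 2) ^ 2 + 4 * (a0 * a1) ^ 2
        + 4 * (a0 * a4) ^ 2 + 8 * (a1 * a4 - a2 * a3) ^ 2
        + 16 * (a1 * a2 * a3 * a4) * (1 - Real.cos θ) := by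
  rw [S23sq]
  linear_combination (-(a0 ^ 2 + a1 ^ 2 + a2 ^ 2 + a3 ^ 2 + a4 ^ 2) - 1) * hsum

lemma S23sq_nonneg (h1 : 0 ≤ a1) (h2 : 0 ≤ a2) (h3 : 0 ≤ a3) (h4 : 0 ≤ a4)
    (hsum : a0 ^ 2 + a1 ^ 2 + a2 ^ 2 + a3 ^ 2 + a4 ^ 2 = 1) :
    0 ≤ S23sq a0 a1 a2 a3 a4 θ := by
  rw [S23sq_eq_of_norm_eq_one hsum]
  exact add_nonneg (by positivity)
    (mul_nonneg (by positivity) (sub_nonneg.2 (Real.cos_le_one θ)))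

lemma fid13_lt_fid12_iff (h0 : 0 ≤ a0) :
    fid13 a0 a1 a2 a3 a4 θ < fid12 a0 a1 a2 a3 a4 θ
      ↔ S13sq a0 a1 a2 a3 a4 θ < S12sq a0 a1 a2 a3 a4 θ :=
  fidelity_lt_iff_of_sub_eq (tau12_nonneg h0) (tau13_nonneg h0) S12sq_sub_S13sq

lemma fid23_lt_fid12_iff (h0 : 0 ≤ a0) (h1 : 0 ≤ a1) (h2 : 0 ≤ a2) (h3 : 0 ≤ a3)
    (h4 : 0 ≤ a4) :
    fid23 a0 a1 a2 a3 a4 θ < fid12 a0 a1 a2 a3 a4 θ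
      ↔ S23sq a0 a1 a2 a3 a4 θ < S12sq a0 a1 a2 a3 a4 θ :=
  fidelity_lt_iff_of_sub_eq (tau12_nonneg h0) tau23_nonneg (S12sq_sub_S23sq h1 h2 h3 h4)

lemma fid23_lt_fid13_iff (h0 : 0 ≤ a0) (h1 : 0 ≤ a1) (h2 : 0 ≤ a2) (h3 : 0 ≤ a3)
    (h4 : 0 ≤ a4) :
    fid23 a0 a1 a2 a3 a4 θ < fid13 a0 a1 a2 a3 a4 θ
      ↔ S23sq a0 a1 a2 a3 a4 θ < S13sq a0 a1 a2 a3 a4 θ :=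
  fidelity_lt_iff_of_sub_eq (tau13_nonneg h0) tau23_nonneg (S13sq_sub_S23sq h1 h2 h3 h4)

end ThreeQubit

theorem stmt13_general (a0 a1 a2 a3 a4 θ : ℝ)
    (h0 : 0 ≤ a0) (h1 : 0 ≤ a1) (h2 : 0 ≤ a2) (h3 : 0 ≤ a3) (h4 : 0 ≤ a4)
    (hsum : a0 ^ 2 + a1 ^ 2 + a2 ^ 2 + a3 ^ 2 + a4 ^ 2 = 1) :
    (fid12 a0 a1 a2 a3 a4 θ > fid13 a0 a1 a2 a3 a4 θ
        ↔ S12sq a0 a1 a2 a3 a4 θ > S13sq a0 a1 a2 a3 a4 θ) ∧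
    (fid12 a0 a1 a2 a3 a4 θ > fid23 a0 a1 a2 a3 a4 θ
        ↔ S12sq a0 a1 a2 a3 a4 θ > S23sq a0 a1 a2 a3 a4 θ) ∧
    (fid13 a0 a1 a2 a3 a4 θ > fid23 a0 a1 a2 a3 a4 θ
        ↔ S13sq a0 a1 a2 a3 a4 θ > S23sq a0 a1 a2 a3 a4 θ) ∧
    ((fid12 a0 a1 a2 a3 a4 θ > fid13 a0 a1 a2 a3 a4 θ ∧
        fid13 a0 a1 a2 a3 a4 θ > fid23 a0 a1 a2 a3 a4 θ)
      ↔ (Real.sqrt (S12sq a0 a1 a2 a3 a4 θ) > Real.sqrt (S13sq a0 a1 a2 a3 a4 θ) ∧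
        Real.sqrt (S13sq a0 a1 a2 a3 a4 θ) > Real.sqrt (S23sq a0 a1 a2 a3 a4 θ))) := by
  simp only [gt_iff_lt]
  rw [fid13_lt_fid12_iff h0, fid23_lt_fid12_iff h0 h1 h2 h3 h4, fid23_lt_fid13_iff h0 h1 h2 h3 h4,
    sqrt_lt_sqrt_chain_iff (S23sq_nonneg h1 h2 h3 h4 hsum)]
  exact ⟨.rfl, .rfl, .rfl, .rfl⟩

/-- For a three-qubit pure state α₀|000⟩ + α₁e^{iθ}|100⟩ + α₂|101⟩ + α₃|110⟩ + α₄|111⟩,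
the average teleportation fidelities f(ρᵢⱼ) = (τᵢⱼ + 2)/3 of the reduced states and
the steering observables maintain the same ordering: each pairwise inequality
f(ρᵢⱼ) > f(ρᵢₖ) holds iff Sᵢⱼ² > Sᵢₖ², and f(ρ₁₂) > f(ρ₁₃) > f(ρ₂₃) iff
S₁₂ > S₁₃ > S₂₃ (with Sᵢⱼ = √(Sᵢⱼ²)). -/
theorem stmt13 (a0 a1 a2 a3 a4 θ : ℝ)
    (h0 : 0 ≤ a0) (h1 : 0 ≤ a1) (h2 : 0 ≤ a2) (h3 : 0 ≤ a3) (h4 : 0 ≤ a4)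
    (hsum : a0 ^ 2 + a1 ^ 2 + a2 ^ 2 + a3 ^ 2 + a4 ^ 2 = 1)
    (hθ : θ ∈ Set.Icc 0 Real.pi) :
    (fid12 a0 a1 a2 a3 a4 θ > fid13 a0 a1 a2 a3 a4 θ
        ↔ S12sq a0 a1 a2 a3 a4 θ > S13sq a0 a1 a2 a3 a4 θ) ∧
    (fid12 a0 a1 a2 a3 a4 θ > fid23 a0 a1 a2 a3 a4 θ
        ↔ S12sq a0 a1 a2 a3 a4 θ > S23sq a0 a1 a2 a3 a4 θ) ∧
    (fid13 a0 a1 a2 a3 a4 θ > fid23 a0 a1 a2 a3 a4 θ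
        ↔ S13sq a0 a1 a2 a3 a4 θ > S23sq a0 a1 a2 a3 a4 θ) ∧
    ((fid12 a0 a1 a2 a3 a4 θ > fid13 a0 a1 a2 a3 a4 θ ∧
        fid13 a0 a1 a2 a3 a4 θ > fid23 a0 a1 a2 a3 a4 θ)
      ↔ (Real.sqrt (S12sq a0 a1 a2 a3 a4 θ) > Real.sqrt (S13sq a0 a1 a2 a3 a4 θ) ∧
        Real.sqrt (S13sq a0 a1 a2 a3 a4 θ) > Real.sqrt (S23sq a0 a1 a2 a3 a4 θ))) :=
  stmt13_general a0 a1 a2 a3 a4 θ h0 h1 h2 h3 h4 hsum
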